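/- Let Γ be a finite labelled simple graph with vertex set V and Artin group A_Γ. Let N₀ ≥ 1 and suppose that A_Γ satisfies the power alternative relative to complete parabolics with uniform exponent N for every N ≥ N₀. Suppose moreover that for every subset Λ ⊆ V spanning a complete subgraph of Γ there exists m_Λ ≥ 1 such that the standard parabolic subgroup A_Λ satisfies the power alternative with uniform exponent m_Λ. Let K = lcm{ m_Λ : Λ ⊆ V spanning a complete subgraph } and let N be the smallest positive multiple of K with N ≥ N₀. Then A_Γ satisfies the power alternative with uniform exponent N. -/

import Mathlib

open scoped Classical

/-- `x` and `y` freely generate a free subgroup of rank 2. -/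
def FreelyGenerateF2 {G : Type*} [Group G] (x y : G) : Prop :=
  Function.Injective (FreeGroup.lift (fun i : Fin 2 => if i = 0 then x else y) :
    FreeGroup (Fin 2) →* G)

/-- `G` satisfies the power alternative. -/
def PowerAlternative (G : Type*) [Group G] : Prop :=
  ∀ g h : G, ∃ n : ℕ, 1 ≤ n ∧ (Commute (g ^ n) (h ^ n) ∨ FreelyGenerateF2 (g ^ n) (h ^ n))

/-- `G` satisfies the power alternative with uniform exponent `n`. -/
def UniformPowerAlternative (G : Type*) [Group G] (n : ℕ) : Prop :=
  ∀ g h : G, Commute (g ^ n) (h ^ n) ∨ FreelyGenerateF2 (g ^ n) (h ^ n)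

/-- The alternating word `stst⋯` of length `k` in the free group on `V`. -/
def artinWord {V : Type*} (s t : V) (k : ℕ) : FreeGroup V :=
  ((List.range k).map (fun i => if i % 2 = 0 then FreeGroup.of s else FreeGroup.of t)).prod

/-- The Artin relations of a labelled graph. -/
def artinRels {V : Type*} (Γ : SimpleGraph V) (m : V → V → ℕ) : Set (FreeGroup V) :=
  {r | ∃ s t : V, Γ.Adj s t ∧ r = artinWord s t (m s t) * (artinWord t s (m s t))⁻¹}

/-- The Artin group of a labelled graph. -/
abbrev ArtinGroup {V : Type*} (Γ : SimpleGraph V) (m : V → V → ℕ) : Type _ :=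
  PresentedGroup (artinRels Γ m)

/-- The standard generator of the Artin group associated to the vertex `v`. -/
def artinGen {V : Type*} (Γ : SimpleGraph V) (m : V → V → ℕ) (v : V) : ArtinGroup Γ m :=
  PresentedGroup.of v

/-- The standard parabolic subgroup of `A_Γ` generated by `S ⊆ V`. -/
def standardParabolic {V : Type*} (Γ : SimpleGraph V) (m : V → V → ℕ) (S : Set V) :
    Subgroup (ArtinGroup Γ m) :=
  Subgroup.closure (artinGen Γ m '' S)

/-- The conjugate `g P g⁻¹` of a subgroup `P`. -/
def conjSubgroup {G : Type*} [Group G] (g : G) (P : Subgroup G) : Subgroup G :=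
  Subgroup.map (MulAut.conj g).toMonoidHom P

/-- Parabolic subgroups: conjugates of standard parabolic subgroups. -/
def IsParabolic {V : Type*} (Γ : SimpleGraph V) (m : V → V → ℕ)
    (P : Subgroup (ArtinGroup Γ m)) : Prop :=
  ∃ (g : ArtinGroup Γ m) (S : Set V), P = conjSubgroup g (standardParabolic Γ m S)

/-- The parabolic intersection property. -/
def ParabolicIntersectionProperty {V : Type*} (Γ : SimpleGraph V) (m : V → V → ℕ) : Prop :=
  ∀ P Q : Subgroup (ArtinGroup Γ m), IsParabolic Γ m P → IsParabolic Γ m Q →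
    IsParabolic Γ m (P ⊓ Q)

/-- The normaliser structure property. -/
def NormaliserStructureProperty {V : Type*} (Γ : SimpleGraph V) (m : V → V → ℕ) : Prop :=
  ∀ S : Set V,
    (Subgroup.normalizer (standardParabolic Γ m S : Set (ArtinGroup Γ m)) : Set (ArtinGroup Γ m)) =
      {x | ∃ a ∈ standardParabolic Γ m S, ∃ q : ArtinGroup Γ m,
        ((fun y => q * y * q⁻¹) '' (artinGen Γ m '' S) = artinGen Γ m '' S) ∧ x = a * q}

/-- `Λ` spans a complete subgraph of `Γ`. -/
def SpansComplete {V : Type*} (Γ : SimpleGraph V) (Λ : Set V) : Prop :=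
  ∀ a ∈ Λ, ∀ b ∈ Λ, a ≠ b → Γ.Adj a b

/-- `A_Γ` satisfies the power alternative relative to complete parabolics with
uniform exponent `N`. -/
def RelativePowerAlternative {V : Type*} (Γ : SimpleGraph V) (m : V → V → ℕ) (N : ℕ) :
    Prop :=
  ∀ g h : ArtinGroup Γ m,
    (∃ (Λ : Set V) (x : ArtinGroup Γ m), SpansComplete Γ Λ ∧
        g ∈ conjSubgroup x (standardParabolic Γ m Λ) ∧
        h ∈ conjSubgroup x (standardParabolic Γ m Λ)) ∨
    Commute (g ^ N) (h ^ N) ∨ FreelyGenerateF2 (g ^ N) (h ^ N)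

/-!
Powers `x ^ c, y ^ c` of a free basis of a rank-two free group again freely generate (ping-pong
on the first letter of reduced words), so the uniform power alternative passes from an exponent to
all its nonzero multiples. A pair lying in a conjugate of a complete standard parabolic `A_Λ`
therefore satisfies it at exponent `N`, since `m_Λ ∣ K ∣ N`; every other pair is handled by the
relative power alternative.
-/

namespace FreeGroup

variable {ι : Type*} [DecidableEq ι]

theorem mk_singleton_pow_succ_mul_mem_startsWith (w : ι × Bool) {g : FreeGroup ι}
    (hg : g ∉ startsWith (w.1, !w.2)) : ∀ c : ℕ, mk [w] ^ (c + 1) * g ∈ startsWith w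
  | 0 => by simpa using startsWith_mk_mul g hg
  | c + 1 => by
    rw [pow_succ', mul_assoc]
    refine startsWith_mk_mul _ fun h => ?_
    have hne : w ≠ (w.1, !w.2) := by simp [Prod.ext_iff]
    exact (startsWith.disjoint_iff_ne.mpr hne).ne_of_mem
      (mk_singleton_pow_succ_mul_mem_startsWith w hg c) h rfl

theorem lift_of_pow_injective [Nontrivial ι] {c : ℕ} (hc : c ≠ 0) :
    Function.Injective (lift fun i : ι => of i ^ c) := by
  obtain ⟨c, rfl⟩ := Nat.exists_eq_succ_of_ne_zero hc
  refine injective_lift_of_ping_pong _ (fun i => startsWith (i, true))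
    (fun i => startsWith (i, false)) (fun i => ⟨of i, by simp [startsWith, toWord_of]⟩)
    (fun i j hij => startsWith.disjoint_iff_ne.mpr (by simpa using hij))
    (fun i j hij => startsWith.disjoint_iff_ne.mpr (by simpa using hij))
    (fun i j => startsWith.disjoint_iff_ne.mpr (by simp)) ?_ ?_
  · rintro i _ ⟨g, hg, rfl⟩
    exact mk_singleton_pow_succ_mul_mem_startsWith (i, true) hg c
  · rintro i _ ⟨g, hg, rfl⟩
    have hinv : (of i ^ (c + 1))⁻¹ = mk [(i, false)] ^ (c + 1) := by
      rw [← inv_pow]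
      rfl
    simp only [Pi.inv_apply, smul_eq_mul, hinv]
    exact mk_singleton_pow_succ_mul_mem_startsWith (i, false) hg c

end FreeGroup

section PowerAlternative

variable {G H : Type*} [Group G] [Group H]

theorem FreelyGenerateF2.map {x y : G} (hxy : FreelyGenerateF2 x y) {f : G →* H}
    (hf : Function.Injective f) : FreelyGenerateF2 (f x) (f y) := by
  have hlift : FreeGroup.lift (fun i : Fin 2 => if i = 0 then f x else f y) =
      f.comp (FreeGroup.lift fun i : Fin 2 => if i = 0 then x else y) := by
    ext i
    by_cases hi : i = 0 <;> simp [hi]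
  unfold FreelyGenerateF2
  rw [hlift]
  exact hf.comp hxy

theorem FreelyGenerateF2.pow {x y : G} (hxy : FreelyGenerateF2 x y) {c : ℕ} (hc : c ≠ 0) :
    FreelyGenerateF2 (x ^ c) (y ^ c) := by
  have hlift : FreeGroup.lift (fun i : Fin 2 => if i = 0 then x ^ c else y ^ c) =
      (FreeGroup.lift fun i : Fin 2 => if i = 0 then x else y).comp
        (FreeGroup.lift fun i : Fin 2 => FreeGroup.of i ^ c) := by
    ext i
    by_cases hi : i = 0 <;> simp [hi]
  unfold FreelyGenerateF2
  rw [hlift]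
  exact hxy.comp (FreeGroup.lift_of_pow_injective hc)

theorem UniformPowerAlternative.mul {n : ℕ} (hG : UniformPowerAlternative G n) {k : ℕ}
    (hk : k ≠ 0) : UniformPowerAlternative G (n * k) := fun g h => by
  simp only [pow_mul]
  exact (hG g h).imp (fun hc => hc.pow_pow k k) (fun hf => hf.pow hk)

theorem UniformPowerAlternative.of_dvd {n N : ℕ} (hG : UniformPowerAlternative G n)
    (hN : N ≠ 0) (hnN : n ∣ N) : UniformPowerAlternative G N := by
  obtain ⟨k, rfl⟩ := hnN
  exact hG.mul (right_ne_zero_of_mul hN)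

theorem UniformPowerAlternative.of_mem_map {K : Subgroup G} {n : ℕ}
    (hK : UniformPowerAlternative K n) {f : G →* H} (hf : Function.Injective f) {g h : H}
    (hg : g ∈ K.map f) (hh : h ∈ K.map f) :
    Commute (g ^ n) (h ^ n) ∨ FreelyGenerateF2 (g ^ n) (h ^ n) := by
  obtain ⟨a, ha, rfl⟩ := hg
  obtain ⟨b, hb, rfl⟩ := hh
  have hinj : Function.Injective (f.comp K.subtype) := hf.comp K.subtype_injective
  exact (hK ⟨a, ha⟩ ⟨b, hb⟩).imp (fun hc => by simpa using hc.map (f.comp K.subtype))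
    (fun hfree => by simpa using hfree.map hinj)

end PowerAlternative

-- Written this way, the filter is elaborated over `Finset (Set V)` (the image of `Finset.univ`
-- under `↑`, through the monad lift), not over `Finset V`; every `Λ : Set V` lies in that image.
theorem dvd_lcm_filter_coe_univ {V : Type*} [Fintype V] (p : Set V → Prop) (f : Set V → ℕ)
    {Λ : Set V} (hΛ : p Λ) :
    f Λ ∣ ((Finset.univ : Finset (Finset V)).filter (fun s => p (↑s : Set V))).lcm
      (fun s => f (↑s : Set V)) :=
  Finset.dvd_lcm (by simpa using ⟨⟨Λ.toFinset, Set.coe_toFinset Λ⟩, hΛ⟩)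

theorem artin_uniform_power_alternative_of_relative_general
    {V : Type*} [Fintype V] (Γ : SimpleGraph V) (m : V → V → ℕ)
    (N₀ : ℕ)
    (hrel : ∀ N : ℕ, N₀ ≤ N → RelativePowerAlternative Γ m N)
    (mfun : Set V → ℕ)
    (hmfun : ∀ Λ : Set V, SpansComplete Γ Λ →
      1 ≤ mfun Λ ∧ UniformPowerAlternative (standardParabolic Γ m Λ) (mfun Λ))
    (K : ℕ)
    (hK : K = Finset.lcm
      ((Finset.univ : Finset (Finset V)).filter (fun Λ => SpansComplete Γ (↑Λ : Set V)))
      (fun Λ => mfun (↑Λ : Set V)))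
    (N : ℕ) (hNpos : 0 < N) (hKdvd : K ∣ N) (hNge : N₀ ≤ N) :
    UniformPowerAlternative (ArtinGroup Γ m) N := by
  intro g h
  rcases hrel N hNge g h with ⟨Λ, x, hΛ, hg, hh⟩ | hcomm | hfree
  · have hΛN : mfun Λ ∣ N := (hK ▸ dvd_lcm_filter_coe_univ (SpansComplete Γ) mfun hΛ).trans hKdvd
    exact ((hmfun Λ hΛ).2.of_dvd hNpos.ne' hΛN).of_mem_map (MulAut.conj x).injective hg hh
  · exact .inl hcomm
  · exact .inr hfree

/-- from the relative power alternative and the uniform power alternative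
for complete parabolics to the uniform power alternative. -/
theorem artin_uniform_power_alternative_of_relative
    {V : Type*} [Fintype V] (Γ : SimpleGraph V) (m : V → V → ℕ)
    (hsymm : ∀ s t : V, m s t = m t s)
    (hlabel : ∀ s t : V, Γ.Adj s t → 2 ≤ m s t)
    (N₀ : ℕ) (hN₀ : 1 ≤ N₀)
    (hrel : ∀ N : ℕ, N₀ ≤ N → RelativePowerAlternative Γ m N)
    (mfun : Set V → ℕ)
    (hmfun : ∀ Λ : Set V, SpansComplete Γ Λ →
      1 ≤ mfun Λ ∧ UniformPowerAlternative (standardParabolic Γ m Λ) (mfun Λ))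
    (K : ℕ)
    (hK : K = Finset.lcm
      ((Finset.univ : Finset (Finset V)).filter (fun Λ => SpansComplete Γ (↑Λ : Set V)))
      (fun Λ => mfun (↑Λ : Set V)))
    (N : ℕ) (hNpos : 0 < N) (hKdvd : K ∣ N) (hNge : N₀ ≤ N)
    (hNmin : ∀ k : ℕ, 0 < k → K ∣ k → N₀ ≤ k → N ≤ k) :
    UniformPowerAlternative (ArtinGroup Γ m) N :=
  artin_uniform_power_alternative_of_relative_general Γ m N₀ hrel mfun hmfun K hK N hNpos hKdvd hNge
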